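/- arXiv:1909.03207 — 2 statements merged into one kernel-verified Lean document; each statement's English description precedes it below -/
import Mathlib

section
/- The map σᴳ(g) = P (gᵀ)⁻¹ P is a group automorphism of SL(3,ℂ) of order exactly 6 (σᴳ is multiplicative, bijective, (σᴳ)⁶ = id and (σᴳ)ʲ ≠ id for 1 ≤ j ≤ 5), it maps SU(3) onto SU(3), and it commutes with the involution τᴳ(g) = (conj(g)ᵀ)⁻¹, i.e. σᴳ(τᴳ(g)) = τᴳ(σᴳ(g)) for all g ∈ SL(3,ℂ). -/
/-!
Since `P * P = 1`, the map `g ↦ P (gᵀ)⁻¹ P` is the inverse transpose twisted by an involution: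
it is multiplicative, preserves determinant one, and, `P` being Hermitian, preserves unitarity
and commutes with `g ↦ (gᴴ)⁻¹`. Applied twice it is conjugation by `P Pᵀ = diag(ε⁴, ε², 1)`,
whose cube is `1`, so `σᴳ⁶ = id` on `SL(3,ℂ)`. On the root subgroup of transvections
`1 + t E₀₁` it acts by `t ↦ ε t`, and `ε` is a primitive sixth root of unity, so no smaller
power of `σᴳ` is the identity.
-/

open Complex Matrix

noncomputable section

abbrev M3 := Matrix (Fin 3) (Fin 3) ℂ

/-- ε = exp(iπ/3). -/
def eps : ℂ := Complex.exp (Real.pi * Complex.I / 3)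

/-- The matrix P with rows (0, ε², 0), (ε⁴, 0, 0), (0, 0, 1). -/
def Pm : M3 := !![0, eps ^ 2, 0; eps ^ 4, 0, 0; 0, 0, 1]

/-- σᴳ(g) = P (gᵀ)⁻¹ P. -/
def sigmaG (g : M3) : M3 := Pm * (gᵀ)⁻¹ * Pm

/-- τᴳ(g) = (conj(g)ᵀ)⁻¹. -/
def tauG (g : M3) : M3 := (gᴴ)⁻¹

/-- SL(3,ℂ). -/
def SL3 : Set M3 := {g : M3 | g.det = 1}

/-- SU(3). -/
def SU3 : Set M3 := {g : M3 | g * gᴴ = 1 ∧ g.det = 1}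

theorem Set.MapsTo.bijOn_of_iterate_succ_eq_self {α : Type*} {f : α → α} {s : Set α} {n : ℕ}
    (hf : Set.MapsTo f s s) (hn : ∀ x ∈ s, f^[n + 1] x = x) : Set.BijOn f s s :=
  Set.InvOn.bijOn
    ⟨fun x hx => (Function.iterate_succ_apply f n x).symm.trans (hn x hx),
      fun x hx => (Function.iterate_succ_apply' f n x).symm.trans (hn x hx)⟩
    hf (hf.iterate n)

theorem transpose_transvection {n R : Type*} [Fintype n] [DecidableEq n] [CommRing R]
    (i j : n) (c : R) :
    (transvection i j c)ᵀ = transvection j i c := by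
  simp [transvection, transpose_single]

section TwistedInvTranspose

variable {n R : Type*} [Fintype n] [DecidableEq n] [CommRing R]

def twistedInvTranspose (P g : Matrix n n R) : Matrix n n R := P * (gᵀ)⁻¹ * P

variable {P : Matrix n n R}

theorem twistedInvTranspose_mul (hP : P * P = 1) (g h : Matrix n n R) :
    twistedInvTranspose P (g * h) = twistedInvTranspose P g * twistedInvTranspose P h := by
  simp only [twistedInvTranspose, transpose_mul, Matrix.mul_inv_rev]
  calc P * ((gᵀ)⁻¹ * (hᵀ)⁻¹) * P = P * (gᵀ)⁻¹ * (P * P) * (hᵀ)⁻¹ * P := by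
        rw [hP, Matrix.mul_one]; simp only [Matrix.mul_assoc]
    _ = P * (gᵀ)⁻¹ * P * (P * (hᵀ)⁻¹ * P) := by simp only [Matrix.mul_assoc]

theorem det_twistedInvTranspose (hP : P * P = 1) {g : Matrix n n R} (hg : g.det = 1) :
    (twistedInvTranspose P g).det = 1 := by
  have hPdet : P.det * P.det = 1 := by rw [← det_mul, hP, det_one]
  rw [twistedInvTranspose, det_mul, det_mul, det_nonsing_inv, det_transpose, hg,
    Ring.inverse_one, mul_one, hPdet]

theorem twistedInvTranspose_twistedInvTranspose (hP : P * P = 1) {g : Matrix n n R}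
    (hg : IsUnit g.det) :
    twistedInvTranspose P (twistedInvTranspose P g) = P * Pᵀ * g * (Pᵀ * P) := by
  have hPT : (Pᵀ)⁻¹ = Pᵀ := inv_eq_right_inv (by rw [← transpose_mul, hP, transpose_one])
  simp only [twistedInvTranspose, transpose_mul, transpose_nonsing_inv, transpose_transpose,
    Matrix.mul_inv_rev, hPT, nonsing_inv_nonsing_inv g hg, Matrix.mul_assoc]

variable [StarRing R]

theorem twistedInvTranspose_mul_conjTranspose_self (hP : P * P = 1) (hPh : Pᴴ = P)
    {g : Matrix n n R} (hg : g * gᴴ = 1) :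
    twistedInvTranspose P g * (twistedInvTranspose P g)ᴴ = 1 := by
  have hgT : (gᵀ)ᴴ * gᵀ = 1 := by
    rw [conjTranspose_transpose_eq_transpose_conjTranspose, ← transpose_mul, hg, transpose_one]
  have hgT_inv : (gᵀ)⁻¹ = (gᵀ)ᴴ := inv_eq_left_inv hgT
  calc twistedInvTranspose P g * (twistedInvTranspose P g)ᴴ
      = P * (gᵀ)ᴴ * (P * P) * gᵀ * P := by
        simp only [twistedInvTranspose, hgT_inv, conjTranspose_mul, conjTranspose_conjTranspose,
          hPh, Matrix.mul_assoc]
    _ = 1 := by rw [hP, Matrix.mul_one, Matrix.mul_assoc P, hgT, Matrix.mul_one, hP]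

theorem twistedInvTranspose_inv_conjTranspose (hP : P * P = 1) (hPh : Pᴴ = P)
    {g : Matrix n n R} (hg : IsUnit g.det) :
    twistedInvTranspose P (gᴴ)⁻¹ = ((twistedInvTranspose P g)ᴴ)⁻¹ := by
  have hP_inv : P⁻¹ = P := inv_eq_right_inv hP
  have hgHT : IsUnit (gᴴᵀ).det := by
    rwa [det_transpose, det_conjTranspose, isUnit_star]
  simp only [twistedInvTranspose, transpose_nonsing_inv, nonsing_inv_nonsing_inv _ hgHT,
    conjTranspose_mul, hPh, conjTranspose_nonsing_inv, Matrix.mul_inv_rev, hP_inv,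
    conjTranspose_transpose_eq_transpose_conjTranspose]

end TwistedInvTranspose

theorem isPrimitiveRoot_eps : IsPrimitiveRoot eps 6 := by
  rw [eps, show (Real.pi : ℂ) * I / 3 = 2 * Real.pi * I / (6 : ℕ) by push_cast; ring]
  exact Complex.isPrimitiveRoot_exp 6 (by norm_num)

theorem eps_pow_three : eps ^ 3 = -1 := by
  rw [eps, ← Complex.exp_nat_mul, ← Complex.exp_pi_mul_I]
  congr 1
  push_cast
  ring

theorem eps_pow_add_six (k : ℕ) : eps ^ (k + 6) = eps ^ k := by
  rw [pow_add, isPrimitiveRoot_eps.pow_eq_one, mul_one]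

theorem conj_eps : starRingEnd ℂ eps = eps ^ 5 := by
  have h : starRingEnd ℂ eps * eps = 1 := by
    rw [eps, ← Complex.exp_conj, ← Complex.exp_add, ← Complex.exp_zero]
    congr 1
    simp only [map_div₀, _root_.map_mul, conj_ofReal, conj_I, map_ofNat]
    ring
  linear_combination eps ^ 5 * h - starRingEnd ℂ eps * isPrimitiveRoot_eps.pow_eq_one

theorem Pm_mul_self : Pm * Pm = 1 := by
  simp [Pm, one_fin_three, ← pow_add, eps_pow_add_six]

theorem conjTranspose_Pm : Pmᴴ = Pm := by
  ext i j
  fin_cases i <;> fin_cases j <;>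
    simp [Pm, conjTranspose_apply, conj_eps, ← pow_mul, eps_pow_add_six]

theorem Pm_mul_transpose_Pm : Pm * Pmᵀ = diagonal ![eps ^ 4, eps ^ 2, 1] := by
  ext i j
  fin_cases i <;> fin_cases j <;>
    simp [Pm, mul_apply, Fin.sum_univ_three, ← pow_add, eps_pow_add_six]

theorem transpose_Pm_mul_Pm : Pmᵀ * Pm = diagonal ![eps ^ 2, eps ^ 4, 1] := by
  ext i j
  fin_cases i <;> fin_cases j <;>
    simp [Pm, mul_apply, Fin.sum_univ_three, ← pow_add, eps_pow_add_six]

theorem diagonal_fin_three_pow_three {R : Type*} [CommSemiring R] {a b c : R}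
    (ha : a ^ 3 = 1) (hb : b ^ 3 = 1) (hc : c ^ 3 = 1) : diagonal ![a, b, c] ^ 3 = 1 := by
  rw [diagonal_pow, ← diagonal_one]
  congr 1
  ext i
  fin_cases i <;> simp [ha, hb, hc]

theorem sigmaG_mul (g h : M3) : sigmaG (g * h) = sigmaG g * sigmaG h :=
  twistedInvTranspose_mul Pm_mul_self g h

theorem mapsTo_sigmaG_SL3 : Set.MapsTo sigmaG SL3 SL3 :=
  fun _ hg => det_twistedInvTranspose Pm_mul_self hg

theorem mapsTo_sigmaG_SU3 : Set.MapsTo sigmaG SU3 SU3 := fun _ hg =>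
  ⟨twistedInvTranspose_mul_conjTranspose_self Pm_mul_self conjTranspose_Pm hg.1,
    mapsTo_sigmaG_SL3 hg.2⟩

theorem sigmaG_iterate_two {g : M3} (hg : g ∈ SL3) :
    sigmaG^[2] g = diagonal ![eps ^ 4, eps ^ 2, 1] * g * diagonal ![eps ^ 2, eps ^ 4, 1] := by
  rw [← Pm_mul_transpose_Pm, ← transpose_Pm_mul_Pm]
  exact twistedInvTranspose_twistedInvTranspose Pm_mul_self ((show g.det = 1 from hg) ▸ isUnit_one)

theorem sigmaG_iterate_six {g : M3} (hg : g ∈ SL3) : sigmaG^[6] g = g := by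
  have hmaps := mapsTo_sigmaG_SL3.iterate 2
  have h2 : (eps ^ 2) ^ 3 = 1 := by simp [← pow_mul, eps_pow_add_six]
  have h4 : (eps ^ 4) ^ 3 = 1 := by simp [← pow_mul, eps_pow_add_six]
  calc sigmaG^[6] g = sigmaG^[2] (sigmaG^[2] (sigmaG^[2] g)) := rfl
    _ = diagonal ![eps ^ 4, eps ^ 2, 1] ^ 3 * g * diagonal ![eps ^ 2, eps ^ 4, 1] ^ 3 := by
      rw [sigmaG_iterate_two (hmaps (hmaps hg)), sigmaG_iterate_two (hmaps hg),
        sigmaG_iterate_two hg]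
      noncomm_ring
    _ = g := by
      rw [diagonal_fin_three_pow_three h4 h2 (one_pow 3),
        diagonal_fin_three_pow_three h2 h4 (one_pow 3), Matrix.one_mul, Matrix.mul_one]

theorem sigmaG_tauG {g : M3} (hg : g ∈ SL3) : sigmaG (tauG g) = tauG (sigmaG g) :=
  twistedInvTranspose_inv_conjTranspose Pm_mul_self conjTranspose_Pm
    ((show g.det = 1 from hg) ▸ isUnit_one)

theorem sigmaG_transvection (t : ℂ) :
    sigmaG (transvection 0 1 t) = transvection 0 1 (eps * t) := by
  have hinv : (transvection (1 : Fin 3) 0 t)⁻¹ = transvection 1 0 (-t) := inv_eq_right_inv (by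
    rw [transvection_mul_transvection_same (i := (1 : Fin 3)) (j := 0) (by decide),
      add_neg_cancel, transvection_zero])
  rw [sigmaG, transpose_transvection, hinv]
  ext i j
  fin_cases i <;> fin_cases j <;>
    simp only [mul_apply, Fin.sum_univ_three] <;>
    simp [Pm, transvection, one_apply, ← pow_add, eps_pow_add_six]
  linear_combination (-(eps * t)) * eps_pow_three

theorem sigmaG_iterate_transvection (k : ℕ) (t : ℂ) :
    sigmaG^[k] (transvection 0 1 t) = transvection 0 1 (eps ^ k * t) := by
  induction k with
  | zero => simp
  | succ k ih => rw [Function.iterate_succ_apply', ih, sigmaG_transvection, pow_succ', mul_assoc]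

/-- σᴳ is a group automorphism of SL(3,ℂ) of order exactly 6, it maps SU(3) onto SU(3)
and it commutes with τᴳ. -/
theorem statement1 :
    (∀ g h : M3, g ∈ SL3 → h ∈ SL3 → sigmaG (g * h) = sigmaG g * sigmaG h) ∧
    Set.BijOn sigmaG SL3 SL3 ∧
    (∀ g ∈ SL3, sigmaG^[6] g = g) ∧
    (∀ j : ℕ, 1 ≤ j → j ≤ 5 → ∃ g ∈ SL3, sigmaG^[j] g ≠ g) ∧
    sigmaG '' SU3 = SU3 ∧
    (∀ g ∈ SL3, sigmaG (tauG g) = tauG (sigmaG g)) := by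
  refine ⟨fun g h _ _ => sigmaG_mul g h,
    mapsTo_sigmaG_SL3.bijOn_of_iterate_succ_eq_self fun _ => sigmaG_iterate_six,
    fun _ => sigmaG_iterate_six, fun j hj1 hj5 => ?_,
    (mapsTo_sigmaG_SU3.bijOn_of_iterate_succ_eq_self fun _ hg => sigmaG_iterate_six hg.2).image_eq,
    fun _ => sigmaG_tauG⟩
  refine ⟨transvection 0 1 1, det_transvection_of_ne 0 1 (by decide) 1, fun h => ?_⟩
  rw [sigmaG_iterate_transvection, mul_one] at h
  have hj : eps ^ j = 1 := by simpa [transvection] using congrFun (congrFun h 0) 1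
  exact isPrimitiveRoot_eps.pow_ne_one_of_pos_of_lt (by omega) (by omega) hj
end
end

section
/- Let P₃ = P Pᵀ P, the matrix with rows (0, 1, 0), (1, 0, 0), (0, 0, 1), and let H be the matrix with rows ((1−i)/2, (1+i)/2, 0), ((1+i)/2, (1−i)/2, 0), (0, 0, 1). Then for every g ∈ SU(3) one has g P₃ gᵀ = P₃ if and only if H g H⁻¹ has all entries real; consequently, the map g ↦ H g H⁻¹ is a group isomorphism from {g ∈ SU(3) : g P₃ gᵀ = P₃} onto SO(3) = {Y a real 3×3 matrix : Y Yᵀ = I, det Y = 1} (regarded inside SU(3)). -/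
open Complex Matrix

noncomputable section

/-- P₃, the matrix with rows (0,1,0), (1,0,0), (0,0,1). -/
def P3 : M3 := !![0, 1, 0; 1, 0, 0; 0, 0, 1]

/-- The matrix H. -/
def Hm : M3 := !![(1 - Complex.I) / 2, (1 + Complex.I) / 2, 0;
                  (1 + Complex.I) / 2, (1 - Complex.I) / 2, 0;
                  0, 0, 1]

lemma eps6 : eps ^ 6 = 1 := by
  rw [eps, ← Complex.exp_nat_mul]
  rw [show ((6:ℕ) : ℂ) * (Real.pi * Complex.I / 3) = 2 * Real.pi * Complex.I by push_cast; ring]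
  exact Complex.exp_two_pi_mul_I

lemma part1 : Pm * Pmᵀ * Pm = P3 := by
  have hT : Pmᵀ = !![0, eps ^ 4, 0; eps ^ 2, 0, 0; 0, 0, 1] := by
    ext i j; fin_cases i <;> fin_cases j <;> rfl
  rw [hT, Pm, Matrix.mul_fin_three, Matrix.mul_fin_three, P3]
  ext i j
  fin_cases i <;> fin_cases j <;> simp <;>
    first
      | ring1
      | linear_combination eps6
      | linear_combination (eps ^ 6 + 1) * eps6

lemma hHc : Hmᴴ = !![(1 + Complex.I) / 2, (1 - Complex.I) / 2, 0;
                  (1 - Complex.I) / 2, (1 + Complex.I) / 2, 0;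
                  0, 0, 1] := by
  ext i j
  fin_cases i <;> fin_cases j <;>
    simp [Hm, Matrix.conjTranspose_apply, map_div₀, map_ofNat] <;> ring

lemma hHHc : Hm * Hmᴴ = 1 := by
  rw [hHc, Hm, Matrix.mul_fin_three, Matrix.one_fin_three]
  ext i j
  fin_cases i <;> fin_cases j <;> simp [Matrix.vecHead, Matrix.vecTail] <;>
    first
      | ring1
      | linear_combination ((-1:ℂ)/2) * Complex.I_sq
      | linear_combination ((1:ℂ)/2) * Complex.I_sq

lemma hHH : Hm * Hm = P3 := by
  rw [Hm, Matrix.mul_fin_three, P3]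
  ext i j
  fin_cases i <;> fin_cases j <;> simp [Matrix.vecHead, Matrix.vecTail] <;>
    first
      | ring1
      | linear_combination ((-1:ℂ)/2) * Complex.I_sq
      | linear_combination ((1:ℂ)/2) * Complex.I_sq

lemma hP3P3 : P3 * P3 = 1 := by
  rw [P3, Matrix.mul_fin_three, Matrix.one_fin_three]
  ext i j; fin_cases i <;> fin_cases j <;> simp [Matrix.vecHead, Matrix.vecTail]

lemma hP3T : P3ᵀ = P3 := by
  ext i j; fin_cases i <;> fin_cases j <;> rfl

lemma hHmT : Hmᵀ = Hm := by
  ext i j; fin_cases i <;> fin_cases j <;> rfl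

lemma hConjH : Hm.map (starRingEnd ℂ) = Hm * P3 := by
  rw [Hm, P3, Matrix.mul_fin_three]
  ext i j
  fin_cases i <;> fin_cases j <;>
    simp [map_div₀, map_ofNat, Matrix.vecHead, Matrix.vecTail] <;> ring

lemma hHcH : Hmᴴ * Hm = 1 := mul_eq_one_comm.mp hHHc

lemma hHinv : Hm⁻¹ = Hmᴴ := Matrix.inv_eq_right_inv hHHc

lemma hConjHc : Hmᴴ.map (starRingEnd ℂ) = Hm := by
  have h : Hmᴴ.map (starRingEnd ℂ) = Hmᵀ := by
    ext i j; simp [Matrix.conjTranspose_apply]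
  rw [h, hHmT]

lemma hConjG (g : M3) : g.map (starRingEnd ℂ) = (gᴴ)ᵀ := by
  ext i j; simp [Matrix.conjTranspose_apply]

lemma L1 (A : M3) : Hmᴴ * (Hm * A) = A := by rw [← Matrix.mul_assoc, hHcH, Matrix.one_mul]
lemma L2 (A : M3) : Hm * (Hmᴴ * A) = A := by rw [← Matrix.mul_assoc, hHHc, Matrix.one_mul]
lemma L3 (A : M3) : P3 * (P3 * A) = A := by rw [← Matrix.mul_assoc, hP3P3, Matrix.one_mul]
lemma L5 : P3 * Hmᴴ = Hm := by rw [← hHH, Matrix.mul_assoc, hHHc, Matrix.mul_one]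

lemma real_iff (Y : M3) : (∀ i j, (Y i j).im = 0) ↔ Y.map (starRingEnd ℂ) = Y := by
  constructor
  · intro h; ext i j
    simpa [Matrix.map_apply] using Complex.conj_eq_iff_im.2 (h i j)
  · intro h i j
    have h2 : Y.map (starRingEnd ℂ) i j = Y i j := by rw [h]
    rw [Matrix.map_apply] at h2
    exact Complex.conj_eq_iff_im.1 h2

lemma key2 (g : M3) (hg : g * gᴴ = 1) (hgg : gᴴ * g = 1) :
    (Hm * P3 * (gᴴ)ᵀ * Hm = Hm * g * Hmᴴ) ↔ g * P3 * gᵀ = P3 := by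
  have hg' : ∀ A : M3, g * (gᴴ * A) = A := by
    intro A; rw [← Matrix.mul_assoc, hg, Matrix.one_mul]
  have hgg' : ∀ A : M3, gᴴ * (g * A) = A := by
    intro A; rw [← Matrix.mul_assoc, hgg, Matrix.one_mul]
  constructor
  · intro h
    have h2 : P3 * ((gᴴ)ᵀ * P3) = g := by
      have h2 := congrArg (fun M : M3 => Hmᴴ * (M * Hm)) h
      simpa only [Matrix.mul_assoc, L1, hHH, hHcH, Matrix.mul_one] using h2
    have h3 : P3 * (gᴴ * P3) = gᵀ := by
      have h3 := congrArg Matrix.transpose h2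
      simpa only [Matrix.transpose_mul, Matrix.transpose_transpose, hP3T,
        Matrix.mul_assoc] using h3
    rw [← h3]
    simp only [Matrix.mul_assoc, L3, hg']
  · intro h
    have h2 : gᵀ = P3 * (gᴴ * P3) := by
      have h2 := congrArg (fun M : M3 => P3 * (gᴴ * M)) h
      simpa only [Matrix.mul_assoc, hgg', L3] using h2
    have h3 : g = P3 * ((gᴴ)ᵀ * P3) := by
      have h3 := congrArg Matrix.transpose h2
      simpa only [Matrix.transpose_mul, Matrix.transpose_transpose, hP3T,
        Matrix.mul_assoc] using h3
    conv_rhs => rw [h3]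
    simp only [Matrix.mul_assoc, L5]

lemma key (g : M3) (hg : g * gᴴ = 1) :
    g * P3 * gᵀ = P3 ↔ ∀ i j, ((Hm * g * Hm⁻¹) i j).im = 0 := by
  have hgg : gᴴ * g = 1 := mul_eq_one_comm.mp hg
  rw [hHinv, real_iff]
  have hmap : (Hm * g * Hmᴴ).map (starRingEnd ℂ) = Hm * P3 * (gᴴ)ᵀ * Hm := by
    rw [Matrix.map_mul, Matrix.map_mul, hConjH, hConjHc, hConjG]
  rw [hmap, key2 g hg hgg]

lemma hTransposeEqConjT (Y : M3) (hY : ∀ i j, (Y i j).im = 0) : Yᵀ = Yᴴ := by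
  have h := (real_iff Y).1 hY
  ext i j
  simp only [Matrix.transpose_apply, Matrix.conjTranspose_apply]
  have : Y.map (starRingEnd ℂ) j i = Y j i := by rw [h]
  rw [Matrix.map_apply] at this
  exact this.symm

/-- For g ∈ SU(3): g P₃ gᵀ = P₃ iff H g H⁻¹ has all real entries; consequently
g ↦ H g H⁻¹ is a group isomorphism from {g ∈ SU(3) : g P₃ gᵀ = P₃} onto SO(3)
(regarded inside SU(3) as the complex matrices with real entries, Y Yᵀ = 1, det Y = 1). -/
theorem statement12 :
    Pm * Pmᵀ * Pm = P3 ∧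
    (∀ g ∈ SU3, g * P3 * gᵀ = P3 ↔ ∀ i j, ((Hm * g * Hm⁻¹) i j).im = 0) ∧
    Set.BijOn (fun g : M3 => Hm * g * Hm⁻¹)
      {g : M3 | g ∈ SU3 ∧ g * P3 * gᵀ = P3}
      {Y : M3 | (∀ i j, (Y i j).im = 0) ∧ Y * Yᵀ = 1 ∧ Y.det = 1} ∧
    (∀ g h : M3, Hm * (g * h) * Hm⁻¹ = (Hm * g * Hm⁻¹) * (Hm * h * Hm⁻¹)) := by
  have hdetH : Hm.det * Hmᴴ.det = 1 := by
    rw [← Matrix.det_mul, hHHc, Matrix.det_one]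
  refine ⟨part1, fun g hg => key g hg.1, ⟨?_, ?_, ?_⟩, ?_⟩
  · -- MapsTo
    rintro g ⟨⟨hgu, hgd⟩, hgp⟩
    have hreal : ∀ i j, ((Hm * g * Hm⁻¹) i j).im = 0 := (key g hgu).1 hgp
    refine ⟨hreal, ?_, ?_⟩
    · rw [hHinv] at hreal ⊢
      rw [hTransposeEqConjT _ hreal]
      have hg' : ∀ A : M3, g * (gᴴ * A) = A := by
        intro A; rw [← Matrix.mul_assoc, hgu, Matrix.one_mul]
      simp only [Matrix.conjTranspose_mul, Matrix.conjTranspose_conjTranspose,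
        Matrix.mul_assoc, L1, L2, hg', hHHc]
    · rw [hHinv, Matrix.det_mul, Matrix.det_mul, hgd, mul_one, hdetH]
  · -- InjOn
    rintro g₁ ⟨⟨hg1, _⟩, _⟩ g₂ ⟨⟨hg2, _⟩, _⟩ h
    simp only [hHinv] at h
    have h2 := congrArg (fun M : M3 => Hmᴴ * (M * Hm)) h
    simpa only [Matrix.mul_assoc, L1, hHcH, Matrix.mul_one] using h2
  · -- SurjOn
    rintro Y ⟨hYreal, hY1, hYdet⟩
    have hYT : Yᵀ = Yᴴ := hTransposeEqConjT Y hYreal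
    have hY1' : ∀ A : M3, Y * (Yᵀ * A) = A := by
      intro A; rw [← Matrix.mul_assoc, hY1, Matrix.one_mul]
    refine ⟨Hmᴴ * Y * Hm, ⟨⟨?_, ?_⟩, ?_⟩, ?_⟩
    · -- unitarity
      simp only [Matrix.conjTranspose_mul, Matrix.conjTranspose_conjTranspose, ← hYT]
      simp only [Matrix.mul_assoc, L1, L2, hY1', hHcH, hHHc, Matrix.mul_one]
    · -- determinant
      rw [Matrix.det_mul, Matrix.det_mul, hYdet, mul_one, mul_comm, hdetH]
    · -- g P3 gᵀ = P3
      have hgu : (Hmᴴ * Y * Hm) * (Hmᴴ * Y * Hm)ᴴ = 1 := by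
        simp only [Matrix.conjTranspose_mul, Matrix.conjTranspose_conjTranspose, ← hYT]
        simp only [Matrix.mul_assoc, L2, hY1', hHcH]
      refine (key _ hgu).2 ?_
      have hfix : Hm * (Hmᴴ * Y * Hm) * Hm⁻¹ = Y := by
        rw [hHinv]
        simp only [Matrix.mul_assoc, L1, L2, hHHc, Matrix.mul_one]
      rw [hfix]
      exact hYreal
    · -- value
      rw [hHinv]
      simp only [Matrix.mul_assoc, L1, L2, hHHc, Matrix.mul_one]
  · -- homomorphism
    intro g h
    rw [hHinv]
    simp only [Matrix.mul_assoc, L1, L2]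
end
end
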